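/- Let U ⊆ ℝ⁴ be open with a smooth Lorentzian metric g of signature (+,−,−,−), and let F be a source-free Maxwell field on (U,g). Then the trace of the Chevreton tensor has the explicit tensor form H_{ab} = ∇_c F_{ad} ∇^c F_b{}^d − (1/4) g_{ab} ∇_c F_{de} ∇^c F^{de}. -/
import Mathlib


noncomputable section

open scoped BigOperators

/-- Points of the spacetime: ℝ⁴ in coordinates. -/
abbrev Pt := Fin 4 → ℝ

/-- A point-dependent rank-2 array of components (metric, 2-form, ...). -/
abbrev Met := Pt → Fin 4 → Fin 4 → ℝ

/-- Partial derivative ∂ₐ f at x (directional derivative along the a-th coordinate). -/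
def pd (f : Pt → ℝ) (a : Fin 4) (x : Pt) : ℝ := fderiv ℝ f x (Pi.single a 1)

/-- The Minkowski matrix diag(1,-1,-1,-1). -/
def mink : Matrix (Fin 4) (Fin 4) ℝ :=
  fun a b => if a = b then (if a = 0 then 1 else -1) else 0

/-- g(x) is a symmetric matrix of Lorentzian signature (+,-,-,-) at each point of U. -/
def LorentzSignatureOn (g : Met) (U : Set Pt) : Prop :=
  ∀ x ∈ U, ∃ P : Matrix (Fin 4) (Fin 4) ℝ, IsUnit P.det ∧
    Matrix.of (g x) = P.transpose * mink * P

/-- ginv is the pointwise inverse matrix of g on U (encodes nondegeneracy of g). -/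
def InverseOn (g ginv : Met) (U : Set Pt) : Prop :=
  ∀ x ∈ U, ∀ a b : Fin 4, (∑ k, g x a k * ginv x k b) = if a = b then (1:ℝ) else 0

/-- All components are smooth (C^∞) on U. -/
def SmoothCompOn (g : Met) (U : Set Pt) : Prop :=
  ∀ a b : Fin 4, ContDiffOn ℝ (⊤ : ℕ∞) (fun x => g x a b) U

/-- Pointwise symmetry on U. -/
def SymmOn (g : Met) (U : Set Pt) : Prop := ∀ x ∈ U, ∀ a b : Fin 4, g x a b = g x b a

/-- Pointwise antisymmetry on U. -/
def AntisymmOn (F : Met) (U : Set Pt) : Prop := ∀ x ∈ U, ∀ a b : Fin 4, F x a b = - F x b a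

/-- Christoffel symbols Γ^a_{bc} = (1/2) g^{ad} (∂_b g_{dc} + ∂_c g_{bd} - ∂_d g_{bc}). -/
def Christoffel (g ginv : Met) (x : Pt) (a b c : Fin 4) : ℝ :=
  (1/2) * ∑ d, ginv x a d *
    (pd (fun y => g y d c) b x + pd (fun y => g y b d) c x - pd (fun y => g y b c) d x)

/-- Covariant derivative ∇_a F_{bc} = ∂_a F_{bc} - Γ^d_{ab} F_{dc} - Γ^d_{ac} F_{bd}. -/
def covdF (g ginv F : Met) (x : Pt) (a b c : Fin 4) : ℝ :=
  pd (fun y => F y b c) a x - (∑ d, Christoffel g ginv x d a b * F x d c)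
    - (∑ d, Christoffel g ginv x d a c * F x b d)

/-- F is a source-free Maxwell field on U: smooth, antisymmetric, with
    g^{ab}∇_a F_{bc} = 0 and ∂_{[a}F_{bc]} = 0. -/
def MaxwellOn (g ginv F : Met) (U : Set Pt) : Prop :=
  SmoothCompOn F U ∧ AntisymmOn F U ∧
  (∀ x ∈ U, ∀ c : Fin 4, (∑ a, ∑ b, ginv x a b * covdF g ginv F x a b c) = 0) ∧
  (∀ x ∈ U, ∀ a b c : Fin 4,
    pd (fun y => F y b c) a x + pd (fun y => F y c a) b x + pd (fun y => F y a b) c x = 0)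

/-- Basic superenergy tensor T_{abcd}{A} of a double (1,2)-form A, with metric
    components gm and inverse metric components gi:
    T_{abcd} = -A_{acf}A_{bd}{}^f - A_{adf}A_{bc}{}^f + g_{ab}A_{ecf}A^e{}_d{}^f
               + (1/2) g_{cd}A_{aef}A_b{}^{ef} - (1/4) g_{ab}g_{cd}A_{efg}A^{efg}. -/
def SE (gm gi : Fin 4 → Fin 4 → ℝ) (A : Fin 4 → Fin 4 → Fin 4 → ℝ) (a b c d : Fin 4) : ℝ :=
  - (∑ f, ∑ k, A a c f * gi f k * A b d k)
  - (∑ f, ∑ k, A a d f * gi f k * A b c k)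
  + gm a b * (∑ e, ∑ i, ∑ f, ∑ k, gi e i * gi f k * A e c f * A i d k)
  + (1/2) * gm c d * (∑ e, ∑ i, ∑ f, ∑ k, gi e i * gi f k * A a e f * A b i k)
  - (1/4) * gm a b * gm c d *
      (∑ e, ∑ i, ∑ f, ∑ k, ∑ p, ∑ q, gi e i * gi f k * gi p q * A e f p * A i k q)

/-- E_{abcd}: the basic superenergy tensor of A_{abc} = ∇_a F_{bc}. -/
def Etens (g ginv F : Met) (x : Pt) (a b c d : Fin 4) : ℝ :=
  SE (g x) (ginv x) (covdF g ginv F x) a b c d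

/-- The Chevreton tensor H_{abcd} = (1/2)(E_{abcd} + E_{cdab}). -/
def Chev (g ginv F : Met) (x : Pt) (a b c d : Fin 4) : ℝ :=
  (1/2) * (Etens g ginv F x a b c d + Etens g ginv F x c d a b)

/-- The trace H_{ab} = g^{cd} H_{cdab} of the Chevreton tensor. -/
def ChevTr (g ginv F : Met) (x : Pt) (a b : Fin 4) : ℝ :=
  ∑ c, ∑ d, ginv x c d * Chev g ginv F x c d a b

/-- Reorder a 4-fold sum: swap the outer pair and the inner pair. -/
lemma reorder4 (f : Fin 4 → Fin 4 → Fin 4 → Fin 4 → ℝ) :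
    (∑ c, ∑ d, ∑ p, ∑ q, f c d p q) = ∑ d, ∑ c, ∑ q, ∑ p, f c d p q := by
  rw [Finset.sum_comm]
  exact Finset.sum_congr rfl fun d _ => Finset.sum_congr rfl fun c _ => Finset.sum_comm

/-- Reorder a 6-fold sum: move the second pair of indices in front of the first pair. -/
lemma reorder6 (f : Fin 4 → Fin 4 → Fin 4 → Fin 4 → Fin 4 → Fin 4 → ℝ) :
    (∑ c, ∑ d, ∑ e, ∑ i, ∑ p, ∑ q, f c d e i p q)
      = ∑ e, ∑ i, ∑ c, ∑ d, ∑ p, ∑ q, f c d e i p q := by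
  calc (∑ c, ∑ d, ∑ e, ∑ i, ∑ p, ∑ q, f c d e i p q)
      = ∑ c, ∑ e, ∑ d, ∑ i, ∑ p, ∑ q, f c d e i p q :=
        Finset.sum_congr rfl fun c _ => Finset.sum_comm
    _ = ∑ e, ∑ c, ∑ d, ∑ i, ∑ p, ∑ q, f c d e i p q := Finset.sum_comm
    _ = ∑ e, ∑ c, ∑ i, ∑ d, ∑ p, ∑ q, f c d e i p q :=
        Finset.sum_congr rfl fun e _ => Finset.sum_congr rfl fun c _ => Finset.sum_comm
    _ = ∑ e, ∑ i, ∑ c, ∑ d, ∑ p, ∑ q, f c d e i p q :=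
        Finset.sum_congr rfl fun e _ => Finset.sum_comm

/-- Pull a constant out of a double sum. -/
lemma pull2 (r : ℝ) (f : Fin 4 → Fin 4 → ℝ) :
    (∑ c, ∑ d, r * f c d) = r * ∑ c, ∑ d, f c d := by
  simp only [← Finset.mul_sum]

/-- The purely algebraic core: for any symmetric `Gi` with `∑ Gi·G = 4`, the trace of the
symmetrized superenergy tensor has the stated explicit form. -/
lemma chevtr_key (G Gi : Fin 4 → Fin 4 → ℝ) (A : Fin 4 → Fin 4 → Fin 4 → ℝ)
    (hsym : ∀ p q : Fin 4, Gi p q = Gi q p)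
    (htr : (∑ c, ∑ d, Gi c d * G c d) = 4) (a b : Fin 4) :
    (∑ c, ∑ d, Gi c d * ((1/2) * (SE G Gi A c d a b + SE G Gi A a b c d))) =
      (∑ c, ∑ e, ∑ d, ∑ k, A c a d * Gi c e * Gi d k * A e b k)
      - (1/4) * G a b *
          (∑ c, ∑ c', ∑ d, ∑ d', ∑ e, ∑ e', Gi c c' * Gi d d' * Gi e e' *
            A c d e * A c' d' e') := by
  -- abbreviations (as proofs, to keep atoms syntactically fixed)
  have h1 : (∑ c, ∑ d, Gi c d * (∑ f, ∑ k, A c a f * Gi f k * A d b k))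
      = ∑ c, ∑ e, ∑ d, ∑ k, A c a d * Gi c e * Gi d k * A e b k := by
    simp only [Finset.mul_sum]
    exact Finset.sum_congr rfl fun c _ => Finset.sum_congr rfl fun e _ =>
      Finset.sum_congr rfl fun d _ => Finset.sum_congr rfl fun k _ => by ring
  have h2 : (∑ c, ∑ d, Gi c d * (∑ f, ∑ k, A c b f * Gi f k * A d a k))
      = ∑ c, ∑ e, ∑ d, ∑ k, A c a d * Gi c e * Gi d k * A e b k := by
    simp only [Finset.mul_sum]
    rw [reorder4]
    exact Finset.sum_congr rfl fun c _ => Finset.sum_congr rfl fun e _ =>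
      Finset.sum_congr rfl fun d _ => Finset.sum_congr rfl fun k _ => by
        rw [hsym e c, hsym k d]; ring
  have h4 : (∑ c, ∑ d, Gi c d * (∑ e, ∑ i, ∑ f, ∑ k, Gi e i * Gi f k * A c e f * A d i k))
      = ∑ c, ∑ c', ∑ d, ∑ d', ∑ e, ∑ e', Gi c c' * Gi d d' * Gi e e' *
          A c d e * A c' d' e' := by
    simp only [Finset.mul_sum]
    exact Finset.sum_congr rfl fun c _ => Finset.sum_congr rfl fun c' _ =>
      Finset.sum_congr rfl fun d _ => Finset.sum_congr rfl fun d' _ =>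
      Finset.sum_congr rfl fun e _ => Finset.sum_congr rfl fun e' _ => by ring
  have h6 : (∑ c, ∑ d, Gi c d * (∑ f, ∑ k, A a c f * Gi f k * A b d k))
      = ∑ e, ∑ i, ∑ f, ∑ k, Gi e i * Gi f k * A a e f * A b i k := by
    simp only [Finset.mul_sum]
    exact Finset.sum_congr rfl fun e _ => Finset.sum_congr rfl fun i _ =>
      Finset.sum_congr rfl fun f _ => Finset.sum_congr rfl fun k _ => by ring
  have h7 : (∑ c, ∑ d, Gi c d * (∑ f, ∑ k, A a d f * Gi f k * A b c k))
      = ∑ e, ∑ i, ∑ f, ∑ k, Gi e i * Gi f k * A a e f * A b i k := by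
    simp only [Finset.mul_sum]
    rw [Finset.sum_comm]
    exact Finset.sum_congr rfl fun e _ => Finset.sum_congr rfl fun i _ =>
      Finset.sum_congr rfl fun f _ => Finset.sum_congr rfl fun k _ => by
        rw [hsym i e]; ring
  have h8 : (∑ c, ∑ d, Gi c d * (∑ e, ∑ i, ∑ f, ∑ k, Gi e i * Gi f k * A e c f * A i d k))
      = ∑ c, ∑ c', ∑ d, ∑ d', ∑ e, ∑ e', Gi c c' * Gi d d' * Gi e e' *
          A c d e * A c' d' e' := by
    simp only [Finset.mul_sum]
    rw [reorder6]
    exact Finset.sum_congr rfl fun c _ => Finset.sum_congr rfl fun c' _ =>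
      Finset.sum_congr rfl fun d _ => Finset.sum_congr rfl fun d' _ =>
      Finset.sum_congr rfl fun e _ => Finset.sum_congr rfl fun e' _ => by ring
  have hS1E : (∑ e, ∑ i, ∑ f, ∑ k, Gi e i * Gi f k * A e a f * A i b k)
      = ∑ c, ∑ e, ∑ d, ∑ k, A c a d * Gi c e * Gi d k * A e b k :=
    Finset.sum_congr rfl fun c _ => Finset.sum_congr rfl fun e _ =>
      Finset.sum_congr rfl fun d _ => Finset.sum_congr rfl fun k _ => by ring
  -- the ten contracted pieces, with constants pulled out
  have e1 : (∑ c, ∑ d, (-(1/2)) * (Gi c d * (∑ f, ∑ k, A c a f * Gi f k * A d b k)))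
      = (-(1/2)) * (∑ c, ∑ e, ∑ d, ∑ k, A c a d * Gi c e * Gi d k * A e b k) := by
    rw [pull2, h1]
  have e2 : (∑ c, ∑ d, (-(1/2)) * (Gi c d * (∑ f, ∑ k, A c b f * Gi f k * A d a k)))
      = (-(1/2)) * (∑ c, ∑ e, ∑ d, ∑ k, A c a d * Gi c e * Gi d k * A e b k) := by
    rw [pull2, h2]
  have e3 : (∑ c, ∑ d,
        ((1/2) * (∑ e, ∑ i, ∑ f, ∑ k, Gi e i * Gi f k * A e a f * A i b k)
          + (1/4) * (∑ e, ∑ i, ∑ f, ∑ k, Gi e i * Gi f k * A a e f * A b i k)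
          + (-(1/4)) * (G a b *
              (∑ e, ∑ i, ∑ f, ∑ k, ∑ p, ∑ q, Gi e i * Gi f k * Gi p q * A e f p * A i k q)))
          * (Gi c d * G c d))
      = ((1/2) * (∑ e, ∑ i, ∑ f, ∑ k, Gi e i * Gi f k * A e a f * A i b k)
          + (1/4) * (∑ e, ∑ i, ∑ f, ∑ k, Gi e i * Gi f k * A a e f * A b i k)
          + (-(1/4)) * (G a b *
              (∑ e, ∑ i, ∑ f, ∑ k, ∑ p, ∑ q, Gi e i * Gi f k * Gi p q * A e f p * A i k q)))
          * 4 := by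
    rw [pull2, htr]
  have e4 : (∑ c, ∑ d, ((1/4) * G a b) *
        (Gi c d * (∑ e, ∑ i, ∑ f, ∑ k, Gi e i * Gi f k * A c e f * A d i k)))
      = ((1/4) * G a b) * (∑ c, ∑ c', ∑ d, ∑ d', ∑ e, ∑ e', Gi c c' * Gi d d' * Gi e e' *
          A c d e * A c' d' e') := by
    rw [pull2, h4]
  have e6 : (∑ c, ∑ d, (-(1/2)) * (Gi c d * (∑ f, ∑ k, A a c f * Gi f k * A b d k)))
      = (-(1/2)) * (∑ e, ∑ i, ∑ f, ∑ k, Gi e i * Gi f k * A a e f * A b i k) := by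
    rw [pull2, h6]
  have e7 : (∑ c, ∑ d, (-(1/2)) * (Gi c d * (∑ f, ∑ k, A a d f * Gi f k * A b c k)))
      = (-(1/2)) * (∑ e, ∑ i, ∑ f, ∑ k, Gi e i * Gi f k * A a e f * A b i k) := by
    rw [pull2, h7]
  have e8 : (∑ c, ∑ d, ((1/2) * G a b) *
        (Gi c d * (∑ e, ∑ i, ∑ f, ∑ k, Gi e i * Gi f k * A e c f * A i d k)))
      = ((1/2) * G a b) * (∑ c, ∑ c', ∑ d, ∑ d', ∑ e, ∑ e', Gi c c' * Gi d d' * Gi e e' *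
          A c d e * A c' d' e') := by
    rw [pull2, h8]
  calc (∑ c, ∑ d, Gi c d * ((1/2) * (SE G Gi A c d a b + SE G Gi A a b c d)))
      = ∑ c, ∑ d,
        ((-(1/2)) * (Gi c d * (∑ f, ∑ k, A c a f * Gi f k * A d b k))
        + (-(1/2)) * (Gi c d * (∑ f, ∑ k, A c b f * Gi f k * A d a k))
        + ((1/2) * (∑ e, ∑ i, ∑ f, ∑ k, Gi e i * Gi f k * A e a f * A i b k)
            + (1/4) * (∑ e, ∑ i, ∑ f, ∑ k, Gi e i * Gi f k * A a e f * A b i k)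
            + (-(1/4)) * (G a b *
                (∑ e, ∑ i, ∑ f, ∑ k, ∑ p, ∑ q, Gi e i * Gi f k * Gi p q * A e f p * A i k q)))
            * (Gi c d * G c d)
        + ((1/4) * G a b) *
            (Gi c d * (∑ e, ∑ i, ∑ f, ∑ k, Gi e i * Gi f k * A c e f * A d i k))
        + (-(1/2)) * (Gi c d * (∑ f, ∑ k, A a c f * Gi f k * A b d k))
        + (-(1/2)) * (Gi c d * (∑ f, ∑ k, A a d f * Gi f k * A b c k))
        + ((1/2) * G a b) *
            (Gi c d * (∑ e, ∑ i, ∑ f, ∑ k, Gi e i * Gi f k * A e c f * A i d k))) :=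
        Finset.sum_congr rfl fun c _ => Finset.sum_congr rfl fun d _ => by
          simp only [SE]; ring
    _ = (∑ c, ∑ e, ∑ d, ∑ k, A c a d * Gi c e * Gi d k * A e b k)
        - (1/4) * G a b *
            (∑ c, ∑ c', ∑ d, ∑ d', ∑ e, ∑ e', Gi c c' * Gi d d' * Gi e e' *
              A c d e * A c' d' e') := by
        simp only [Finset.sum_add_distrib]
        linear_combination e1 + e2 + e3 + e4 + e6 + e7 + e8 + 2 * hS1E

/-- Explicit tensor form of the trace of the Chevreton tensor for a source-free
Maxwell field: H_{ab} = ∇_c F_{ad} ∇^c F_b{}^d - (1/4) g_{ab} ∇_c F_{de} ∇^c F^{de}. -/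
theorem chevreton_trace_tensor_form
    (U : Set Pt) (hU : IsOpen U) (g ginv F : Met)
    (hg : SmoothCompOn g U) (hgsym : SymmOn g U) (hsig : LorentzSignatureOn g U)
    (hginv : SmoothCompOn ginv U) (hinv : InverseOn g ginv U)
    (hF : MaxwellOn g ginv F U) :
    ∀ x ∈ U, ∀ a b : Fin 4,
      ChevTr g ginv F x a b =
        (∑ c, ∑ e, ∑ d, ∑ k, covdF g ginv F x c a d * ginv x c e * ginv x d k *
            covdF g ginv F x e b k)
        - (1/4) * g x a b *
            (∑ c, ∑ c', ∑ d, ∑ d', ∑ e, ∑ e', ginv x c c' * ginv x d d' * ginv x e e' *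
              covdF g ginv F x c d e * covdF g ginv F x c' d' e') := by
  intro x hx a b
  -- ginv x is symmetric, since it is the inverse of the symmetric matrix g x
  have hMN : (Matrix.of (g x)) * (Matrix.of (ginv x)) = 1 := by
    ext p q
    rw [Matrix.mul_apply]
    simpa [Matrix.one_apply] using hinv x hx p q
  have hMt : (Matrix.of (g x)).transpose = Matrix.of (g x) := by
    ext p q
    exact hgsym x hx q p
  have hNt : (Matrix.of (ginv x)).transpose = Matrix.of (ginv x) := by
    calc (Matrix.of (ginv x)).transpose
        = (Matrix.of (ginv x)).transpose * ((Matrix.of (g x)) * (Matrix.of (ginv x))) := by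
          rw [hMN, Matrix.mul_one]
      _ = ((Matrix.of (ginv x)).transpose * (Matrix.of (g x)).transpose) * (Matrix.of (ginv x)) := by
          rw [hMt, Matrix.mul_assoc]
      _ = ((Matrix.of (g x)) * (Matrix.of (ginv x))).transpose * (Matrix.of (ginv x)) := by
          rw [Matrix.transpose_mul]
      _ = Matrix.of (ginv x) := by rw [hMN, Matrix.transpose_one, Matrix.one_mul]
  have hsym : ∀ p q : Fin 4, ginv x p q = ginv x q p := by
    intro p q
    have := congrFun (congrFun hNt p) q
    simpa [Matrix.transpose_apply] using this.symm
  -- the full trace g^{cd} g_{cd} = 4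
  have hdiag : ∀ c : Fin 4, (∑ d, ginv x c d * g x c d) = 1 := by
    intro c
    have h := hinv x hx c c
    simp only [if_pos rfl] at h
    calc (∑ d, ginv x c d * g x c d)
        = ∑ d, g x c d * ginv x d c :=
          Finset.sum_congr rfl fun d _ => by rw [hsym c d]; ring
      _ = 1 := h
  have htr : (∑ c, ∑ d, ginv x c d * g x c d) = (4:ℝ) := by
    simp [hdiag]
  have hk := chevtr_key (g x) (ginv x) (covdF g ginv F x) hsym htr a b
  simpa only [ChevTr, Chev, Etens] using hk
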